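/- arXiv:2201.03702 — 4 statements merged into one kernel-verified Lean document; each statement's English description precedes it below -/
import Mathlib

section
/- Let A₁, A₂, A₃ be entailed sets of three hypotheses where A₃ is a generalization of A₁ (i.e., A₁ ⊆ A₃). If S_ACC(A₂) > S_ACC(A₁) + fn(A₁), then S_ACC(A₂) > S_ACC(A₃). (Sound generalization-pruning constraint under the accuracy score.) -/
/-!
Passing to a generalization can only lose true negatives, and it can gain at most the `fn(A₁)`
positives that `A₁` misses, so `S_ACC(A₃) ≤ S_ACC(A₁) + fn(A₁) < S_ACC(A₂)`.
-/

open Finset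

variable {α : Type*}

/-- True positives: examples entailed by the hypothesis that are positive. -/
def tp [DecidableEq α] (Ep A : Finset α) : ℕ := (A ∩ Ep).card

/-- True negatives: negative examples not entailed by the hypothesis. -/
def tn [DecidableEq α] (En A : Finset α) : ℕ := (En \ A).card

/-- False negatives: positive examples not entailed by the hypothesis. -/
def fnScore [DecidableEq α] (Ep A : Finset α) : ℕ := (Ep \ A).card

/-- False positives: negative examples entailed by the hypothesis. -/
def fpScore [DecidableEq α] (En A : Finset α) : ℕ := (A ∩ En).card

/-- Accuracy score. -/
def sAcc [DecidableEq α] (Ep En A : Finset α) : ℕ := tp Ep A + tn En A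

/-- MDL score: accuracy minus hypothesis size, as an integer. -/
def sMdl [DecidableEq α] (Ep En A : Finset α) (s : ℕ) : ℤ := (tp Ep A + tn En A : ℤ) - s

section Scores

variable [DecidableEq α] {Ep En A B : Finset α}

theorem tp_add_fnScore (Ep A : Finset α) : tp Ep A + fnScore Ep A = Ep.card := by
  rw [tp, fnScore, inter_comm]
  exact card_inter_add_card_sdiff Ep A

theorem tp_le_card (Ep A : Finset α) : tp Ep A ≤ Ep.card :=
  card_le_card inter_subset_right

theorem tn_anti (h : A ⊆ B) : tn En B ≤ tn En A :=
  card_le_card (sdiff_subset_sdiff subset_rfl h)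

theorem sAcc_le_add_fnScore_of_subset (h : A ⊆ B) :
    sAcc Ep En B ≤ sAcc Ep En A + fnScore Ep A := by
  have htp : tp Ep B ≤ tp Ep A + fnScore Ep A := tp_add_fnScore Ep A ▸ tp_le_card Ep B
  have htn : tn En B ≤ tn En A := tn_anti h
  unfold sAcc
  omega

end Scores

theorem acc_generalization_pruning [DecidableEq α] (Ep En A1 A2 A3 : Finset α)
    (hgen : A1 ⊆ A3)
    (h : sAcc Ep En A2 > sAcc Ep En A1 + fnScore Ep A1) :
    sAcc Ep En A2 > sAcc Ep En A3 :=
  (sAcc_le_add_fnScore_of_subset hgen).trans_lt h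
end

section
/- Let A₁, A₂, A₃ be entailed sets of three hypotheses where A₃ is a specialization of A₁ (i.e., A₃ ⊆ A₁). If S_ACC(A₂) > S_ACC(A₁) + fp(A₁), then S_ACC(A₂) > S_ACC(A₃). (Sound specialization-pruning constraint under the accuracy score.) -/
open Finset

variable {α : Type*}

section Scores

variable [DecidableEq α] {Ep En A B : Finset α}

theorem tp_mono (hAB : A ⊆ B) : tp Ep A ≤ tp Ep B :=
  card_le_card (inter_subset_inter_right hAB)

theorem tn_le_card : tn En A ≤ En.card :=
  card_le_card sdiff_subset

theorem tn_add_fpScore : tn En A + fpScore En A = En.card := by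
  rw [tn, fpScore, inter_comm, add_comm, card_inter_add_card_sdiff]

/-- A specialization can at best keep every true positive and turn every false positive into a
true negative. -/
theorem sAcc_le_sAcc_add_fpScore_of_subset (hAB : A ⊆ B) :
    sAcc Ep En A ≤ sAcc Ep En B + fpScore En B := by
  calc sAcc Ep En A = tp Ep A + tn En A := rfl
    _ ≤ tp Ep B + En.card := Nat.add_le_add (tp_mono hAB) tn_le_card
    _ = sAcc Ep En B + fpScore En B := by rw [sAcc, ← tn_add_fpScore, add_assoc]

end Scores

theorem acc_specialization_pruning [DecidableEq α] (Ep En A1 A2 A3 : Finset α)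
    (hspec : A3 ⊆ A1)
    (h : sAcc Ep En A2 > sAcc Ep En A1 + fpScore En A1) :
    sAcc Ep En A2 > sAcc Ep En A3 :=
  (sAcc_le_sAcc_add_fpScore_of_subset hspec).trans_lt h
end

section
/- Let A₁ and A₂ be entailed sets of two hypotheses with A₁ ⊆ A₂ (A₂ is a generalization of A₁) and tp(A₁) = tp(A₂). Then for every set C of examples entailed by a further set of clauses, there exists a generalization of A₁, i.e., a set B with A₁ ⊆ B, such that S_ACC(B) ≥ S_ACC(A₂ ∪ C). (Sound constraint on adding clauses to a redundant non-recursive generalization.) -/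
open Finset

variable {α : Type*}

/-! As `A1 ⊆ A2` and both cover the same positive examples, `A2 \ A1` consists of negatives only.
Hence for any added clauses `C`, the specialization `A1 ∪ C` covers the same positives as `A2 ∪ C`
and no more negatives, so it is at least as accurate. -/

section Scores

variable [DecidableEq α] {Ep En A1 A2 : Finset α}

theorem inter_eq_of_subset_of_tp_eq (hgen : A1 ⊆ A2) (htp : tp Ep A1 = tp Ep A2) :
    A1 ∩ Ep = A2 ∩ Ep :=
  eq_of_subset_of_card_le (inter_subset_inter_right hgen) htp.ge

theorem tp_union_congr (h : A1 ∩ Ep = A2 ∩ Ep) (C : Finset α) :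
    tp Ep (A1 ∪ C) = tp Ep (A2 ∪ C) := by
  rw [tp, tp, union_inter_distrib_right, union_inter_distrib_right, h]

theorem tn_anti_s4 (hgen : A1 ⊆ A2) : tn En A2 ≤ tn En A1 :=
  card_le_card (sdiff_subset_sdiff_right En hgen)

theorem sAcc_union_le_of_subset_of_tp_eq (hgen : A1 ⊆ A2) (htp : tp Ep A1 = tp Ep A2)
    (C : Finset α) : sAcc Ep En (A2 ∪ C) ≤ sAcc Ep En (A1 ∪ C) := by
  rw [sAcc, sAcc, tp_union_congr (inter_eq_of_subset_of_tp_eq hgen htp) C]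
  exact Nat.add_le_add_left (tn_anti_s4 (union_subset_union_left hgen)) _

end Scores

theorem acc_redundant_generalization_extension [DecidableEq α] (Ep En A1 A2 : Finset α)
    (hgen : A1 ⊆ A2) (htp : tp Ep A1 = tp Ep A2) :
    ∀ C : Finset α, ∃ B : Finset α, A1 ⊆ B ∧ sAcc Ep En B ≥ sAcc Ep En (A2 ∪ C) :=
  fun C => ⟨A1 ∪ C, subset_union_left, sAcc_union_le_of_subset_of_tp_eq hgen htp C⟩
end

section
/- Let A₁ and A₂ be entailed sets of two hypotheses with A₂ ⊆ A₁ (A₂ is a specialization of A₁) and tn(A₁) = tn(A₂). Then for every set C of examples entailed by a further set of clauses, there exists a generalization of A₁, i.e., a set B with A₁ ⊆ B, such that S_ACC(B) ≥ S_ACC(A₂ ∪ C). (Sound constraint on non-recursive extensions of a specialization with equal true-negative score.) -/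
/-!
Since `A₂ ⊆ A₁`, equal true-negative counts force `E⁻ \ A₁ = E⁻ \ A₂`: the extra examples
of `A₁` are never negative. Hence `B = A₁ ∪ C` excludes exactly the negatives that `A₂ ∪ C`
excludes, while covering at least as many positives.
-/

open Finset

variable {α : Type*}

section Scores

variable [DecidableEq α]

theorem Finset.sdiff_eq_sdiff_of_subset_of_card_eq {E A B : Finset α} (hBA : B ⊆ A)
    (hcard : #(E \ A) = #(E \ B)) : E \ A = E \ B :=
  eq_of_subset_of_card_le (sdiff_subset_sdiff le_rfl hBA) hcard.ge

theorem tp_mono_s6 (Ep : Finset α) : Monotone (tp Ep) := fun _ _ hAB =>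
  card_le_card (inter_subset_inter hAB le_rfl)

theorem tn_union_eq_of_subset_of_tn_eq {En A1 A2 : Finset α} (hspec : A2 ⊆ A1)
    (htn : tn En A1 = tn En A2) (C : Finset α) : tn En (A1 ∪ C) = tn En (A2 ∪ C) := by
  unfold tn at htn ⊢
  rw [sdiff_union_distrib, sdiff_union_distrib,
    sdiff_eq_sdiff_of_subset_of_card_eq hspec htn]

theorem sAcc_union_le_of_subset_of_tn_eq {Ep En A1 A2 : Finset α} (hspec : A2 ⊆ A1)
    (htn : tn En A1 = tn En A2) (C : Finset α) : sAcc Ep En (A2 ∪ C) ≤ sAcc Ep En (A1 ∪ C) := by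
  unfold sAcc
  rw [tn_union_eq_of_subset_of_tn_eq hspec htn C]
  exact Nat.add_le_add_right (tp_mono_s6 Ep (union_subset_union_left hspec)) _

end Scores

theorem acc_specialization_extension [DecidableEq α] (Ep En A1 A2 : Finset α)
    (hspec : A2 ⊆ A1) (htn : tn En A1 = tn En A2) :
    ∀ C : Finset α, ∃ B : Finset α, A1 ⊆ B ∧ sAcc Ep En B ≥ sAcc Ep En (A2 ∪ C) := fun C =>
  ⟨A1 ∪ C, subset_union_left, sAcc_union_le_of_subset_of_tn_eq hspec htn C⟩
end
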